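/- The canonical model M (whose states are the maximally consistent sets of modal formulas over Φ) is a saturated Kripke structure. -/

import Mathlib

/-- Modal formulas over a set `Φ` of atomic propositions. -/
inductive ModalFormula (Φ : Type*) : Type _ where
  | atom : Φ → ModalFormula Φ
  | top  : ModalFormula Φ
  | bot  : ModalFormula Φ
  | neg  : ModalFormula Φ → ModalFormula Φ
  | and  : ModalFormula Φ → ModalFormula Φ → ModalFormula Φ
  | or   : ModalFormula Φ → ModalFormula Φ → ModalFormula Φ
  | box  : ModalFormula Φ → ModalFormula Φ

/-- `◇φ := ¬□¬φ`. -/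
def ModalFormula.dia {Φ : Type*} (φ : ModalFormula Φ) : ModalFormula Φ :=
  .neg (.box (.neg φ))

/-- A Kripke structure on state set `X`: a transition relation and a valuation. -/
structure KripkeStructure (Φ X : Type*) where
  R : X → X → Prop
  v : X → Set Φ

/-- Satisfaction `x ⊨ φ`. -/
def Satisfies {Φ X : Type*} (M : KripkeStructure Φ X) : X → ModalFormula Φ → Prop
  | x, .atom p  => p ∈ M.v x
  | _, .top     => True
  | _, .bot     => False
  | x, .neg φ   => ¬ Satisfies M x φ
  | x, .and φ ψ => Satisfies M x φ ∧ Satisfies M x ψ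
  | x, .or φ ψ  => Satisfies M x φ ∨ Satisfies M x ψ
  | x, .box φ   => ∀ y, M.R x y → Satisfies M y φ

/-- `B` is a bisimulation between `M` and `N`. -/
def IsBisimulation {Φ X Y : Type*} (M : KripkeStructure Φ X) (N : KripkeStructure Φ Y)
    (B : X → Y → Prop) : Prop :=
  ∀ x y, B x y →
    M.v x = N.v y ∧
    (∀ x', M.R x x' → ∃ y', N.R y y' ∧ B x' y') ∧
    (∀ y', N.R y y' → ∃ x', M.R x x' ∧ B x' y')

/-- `x ∼ y` : there is a bisimulation relating `x` and `y`. -/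
def Bisimilar {Φ X Y : Type*} (M : KripkeStructure Φ X) (N : KripkeStructure Φ Y)
    (x : X) (y : Y) : Prop :=
  ∃ B : X → Y → Prop, IsBisimulation M N B ∧ B x y

/-- `x ≈ y` : logical equivalence. -/
def LogEquiv {Φ X Y : Type*} (M : KripkeStructure Φ X) (N : KripkeStructure Φ Y)
    (x : X) (y : Y) : Prop :=
  ∀ φ : ModalFormula Φ, Satisfies M x φ ↔ Satisfies N y φ

/-- A Kripke homomorphism: a map whose graph is a bisimulation. -/
def IsKripkeHom {Φ X Y : Type*} (M : KripkeStructure Φ X) (N : KripkeStructure Φ Y)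
    (f : X → Y) : Prop :=
  IsBisimulation M N (fun x y => y = f x)

/-- `x` is m-saturated: whenever every finite subset of `S` is satisfied at some
successor of `x`, some successor of `x` satisfies all of `S`. -/
def MSaturated {Φ X : Type*} (M : KripkeStructure Φ X) (x : X) : Prop :=
  ∀ S : Set (ModalFormula Φ),
    (∀ S₀ ⊆ S, S₀.Finite → ∃ y, M.R x y ∧ ∀ φ ∈ S₀, Satisfies M y φ) →
    ∃ y, M.R x y ∧ ∀ φ ∈ S, Satisfies M y φ

/-- A Kripke structure is saturated if every state is m-saturated. -/
def Saturated {Φ X : Type*} (M : KripkeStructure Φ X) : Prop :=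
  ∀ x : X, MSaturated M x

/-- `φ → ψ` abbreviates `¬φ ∨ ψ`. -/
def ModalFormula.impl {Φ : Type*} (φ ψ : ModalFormula Φ) : ModalFormula Φ :=
  .or (.neg φ) ψ

/-- Propositional evaluation of a modal formula: the boolean connectives are
interpreted classically were atoms and boxed formulas get their truth value
from the assignment `w`. -/
def PropEval {Φ : Type*} (w : ModalFormula Φ → Prop) : ModalFormula Φ → Prop
  | .atom p  => w (.atom p)
  | .top     => True
  | .bot     => False
  | .neg φ   => ¬ PropEval w φ
  | .and φ ψ => PropEval w φ ∧ PropEval w ψ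
  | .or φ ψ  => PropEval w φ ∨ PropEval w ψ
  | .box φ   => w (.box φ)

/-- A propositional tautology: true under every assignment of truth values to
atoms and boxed formulas. -/
def IsPropTautology {Φ : Type*} (φ : ModalFormula Φ) : Prop :=
  ∀ w : ModalFormula Φ → Prop, PropEval w φ

/-- Derivability in the minimal normal modal logic K: all propositional
tautologies, the axiom `□(φ→ψ) → (□φ→□ψ)`, modus ponens and necessitation. -/
inductive Deriv {Φ : Type*} : ModalFormula Φ → Prop where
  | taut {φ} : IsPropTautology φ → Deriv φ
  | axK (φ ψ : ModalFormula Φ) :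
      Deriv (ModalFormula.impl (.box (ModalFormula.impl φ ψ))
        (ModalFormula.impl (.box φ) (.box ψ)))
  | mp {φ ψ} : Deriv (ModalFormula.impl φ ψ) → Deriv φ → Deriv ψ
  | nec {φ} : Deriv φ → Deriv (.box φ)

/-- Conjunction of a finite list of formulas. -/
def listConj {Φ : Type*} (L : List (ModalFormula Φ)) : ModalFormula Φ :=
  L.foldr .and .top

/-- `u` is consistent if no finite subset of `u` derives `⊥`. -/
def Consistent {Φ : Type*} (u : Set (ModalFormula Φ)) : Prop :=
  ∀ L : List (ModalFormula Φ), (∀ φ ∈ L, φ ∈ u) →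
    ¬ Deriv (ModalFormula.impl (listConj L) .bot)

/-- `u` is maximally consistent. -/
def MaxConsistent {Φ : Type*} (u : Set (ModalFormula Φ)) : Prop :=
  Consistent u ∧ ∀ φ : ModalFormula Φ, φ ∈ u ∨ ModalFormula.neg φ ∈ u

/-- The states of the canonical model: maximally consistent sets. -/
def CanonicalState (Φ : Type*) : Type _ :=
  {u : Set (ModalFormula Φ) // MaxConsistent u}

/-- The canonical model: `u → w` iff `□φ ∈ u` implies `φ ∈ w`, and
`v(u) = u ∩ Φ`. -/
def CanonicalModel (Φ : Type*) : KripkeStructure Φ (CanonicalState Φ) where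
  R u w := ∀ φ : ModalFormula Φ, ModalFormula.box φ ∈ u.1 → φ ∈ w.1
  v u := {p : Φ | ModalFormula.atom p ∈ u.1}

/-!
A set of formulas is satisfied at some successor of `u` in the canonical model as soon as it is
consistent together with `{ψ | □ψ ∈ u}`: Lindenbaum's lemma extends the union to a maximally
consistent `w`, which is a successor of `u`, and the truth lemma turns membership in `w` into
satisfaction at `w`. If every finite subset of `S` is satisfied at a successor of `u`, then
`S ∪ {ψ | □ψ ∈ u}` is consistent, since each of its finite subsets lies inside such a successor,
which is itself a consistent set.
-/

open ModalFormula

section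

variable {Φ : Type*}

@[simp]
theorem propEval_impl (w : ModalFormula Φ → Prop) (φ ψ : ModalFormula Φ) :
    PropEval w (impl φ ψ) ↔ (PropEval w φ → PropEval w ψ) := by
  rw [impl, PropEval, PropEval, imp_iff_not_or]

@[simp]
theorem propEval_listConj (w : ModalFormula Φ → Prop) :
    ∀ L : List (ModalFormula Φ), PropEval w (listConj L) ↔ ∀ φ ∈ L, PropEval w φ
  | [] => by simp [listConj, PropEval]
  | a :: L => by
    rw [listConj, List.foldr_cons, PropEval, ← listConj, propEval_listConj w L,
      List.forall_mem_cons]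

theorem Deriv.mp_tautology {φ ψ : ModalFormula Φ} (ht : IsPropTautology (impl φ ψ))
    (h : Deriv φ) : Deriv ψ :=
  Deriv.mp (Deriv.taut ht) h

section MaxConsistent

variable {u : Set (ModalFormula Φ)} {φ ψ : ModalFormula Φ}

theorem MaxConsistent.mem_of_deriv_impl (hu : MaxConsistent u) {L : List (ModalFormula Φ)}
    (hL : ∀ ψ ∈ L, ψ ∈ u) (h : Deriv (impl (listConj L) φ)) : φ ∈ u := by
  refine (hu.2 φ).resolve_right fun hnφ => hu.1 (neg φ :: L) ?_ ?_
  · simpa [hnφ] using hL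
  · refine h.mp_tautology fun w => ?_
    simp only [propEval_impl, propEval_listConj, List.forall_mem_cons, PropEval]
    tauto

theorem MaxConsistent.mem_of_tautology (hu : MaxConsistent u) {L : List (ModalFormula Φ)}
    (hL : ∀ ψ ∈ L, ψ ∈ u) (ht : IsPropTautology (impl (listConj L) φ)) : φ ∈ u :=
  hu.mem_of_deriv_impl hL (Deriv.taut ht)

theorem MaxConsistent.mem_of_deriv (hu : MaxConsistent u) (h : Deriv φ) : φ ∈ u :=
  hu.mem_of_deriv_impl (L := []) (by simp) (h.mp_tautology fun w => by simp)

theorem MaxConsistent.top_mem (hu : MaxConsistent u) : (top : ModalFormula Φ) ∈ u :=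
  hu.mem_of_deriv (Deriv.taut fun _ => trivial)

theorem MaxConsistent.bot_not_mem (hu : MaxConsistent u) : (bot : ModalFormula Φ) ∉ u :=
  fun h => hu.1 [bot] (by simpa using h) (Deriv.taut fun w => by simp [PropEval])

theorem MaxConsistent.neg_mem_iff (hu : MaxConsistent u) : neg φ ∈ u ↔ φ ∉ u :=
  ⟨fun hnφ hφ => hu.bot_not_mem <| hu.mem_of_tautology (L := [φ, neg φ]) (by simp [hφ, hnφ])
      fun w => by simp [PropEval],
    (hu.2 φ).resolve_left⟩

theorem MaxConsistent.and_mem_iff (hu : MaxConsistent u) : and φ ψ ∈ u ↔ φ ∈ u ∧ ψ ∈ u := by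
  refine ⟨fun h => ⟨?_, ?_⟩, fun h => ?_⟩
  · exact hu.mem_of_tautology (L := [and φ ψ]) (by simpa using h) fun w => by simp_all [PropEval]
  · exact hu.mem_of_tautology (L := [and φ ψ]) (by simpa using h) fun w => by simp_all [PropEval]
  · exact hu.mem_of_tautology (L := [φ, ψ]) (by simpa using h) fun w => by simp [PropEval]

theorem MaxConsistent.or_mem_iff (hu : MaxConsistent u) : or φ ψ ∈ u ↔ φ ∈ u ∨ ψ ∈ u := by
  refine ⟨fun h => ?_, fun h => h.elim (fun hφ => ?_) (fun hψ => ?_)⟩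
  · by_contra! hn
    refine hu.bot_not_mem <| hu.mem_of_tautology (L := [or φ ψ, neg φ, neg ψ])
      (by simp [h, hu.neg_mem_iff.2 hn.1, hu.neg_mem_iff.2 hn.2]) fun w => ?_
    simp only [propEval_impl, propEval_listConj, List.forall_mem_cons, PropEval]
    tauto
  · exact hu.mem_of_tautology (L := [φ]) (by simpa using hφ) fun w => by simp_all [PropEval]
  · exact hu.mem_of_tautology (L := [ψ]) (by simpa using hψ) fun w => by simp_all [PropEval]

theorem MaxConsistent.mem_of_impl_mem (hu : MaxConsistent u) (himp : impl φ ψ ∈ u)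
    (hφ : φ ∈ u) : ψ ∈ u :=
  (hu.or_mem_iff.1 himp).resolve_left (hu.neg_mem_iff.1 · hφ)

theorem MaxConsistent.box_mem_of_deriv_impl (hu : MaxConsistent u) {L : List (ModalFormula Φ)}
    (hL : ∀ ψ ∈ L, box ψ ∈ u) (h : Deriv (impl (listConj L) φ)) : box φ ∈ u := by
  induction L generalizing φ with
  | nil => exact hu.mem_of_deriv (Deriv.nec (h.mp_tautology fun w => by simp))
  | cons a L ih =>
    have hbox : box (impl a φ) ∈ u :=
      ih (fun ψ hψ => hL ψ (.tail _ hψ)) <| h.mp_tautology fun w => by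
        simp only [propEval_impl, propEval_listConj, List.forall_mem_cons]; tauto
    exact hu.mem_of_impl_mem (hu.mem_of_impl_mem (hu.mem_of_deriv (Deriv.axK a φ)) hbox)
      (hL a (.head _))

end MaxConsistent

section Consistent

variable {Γ : Set (ModalFormula Φ)} {φ : ModalFormula Φ}

theorem exists_deriv_neg_of_not_consistent_insert (h : ¬ Consistent (insert φ Γ)) :
    ∃ L : List (ModalFormula Φ), (∀ ψ ∈ L, ψ ∈ Γ) ∧ Deriv (impl (listConj L) (neg φ)) := by
  classical
  simp only [Consistent, not_forall, not_not] at h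
  obtain ⟨L, hL, hd⟩ := h
  refine ⟨L.filter (· ≠ φ), fun ψ hψ => ?_, hd.mp_tautology fun w => ?_⟩
  · rw [List.mem_filter, decide_eq_true_iff] at hψ
    exact (hL ψ hψ.1).resolve_left hψ.2
  · simp only [propEval_impl, propEval_listConj, List.mem_filter, decide_eq_true_iff, PropEval]
    intro hnot hfilter hφ
    exact hnot fun ψ hψ => if hψφ : ψ = φ then hψφ ▸ hφ else hfilter ψ ⟨hψ, hψφ⟩

theorem Consistent.insert_or_insert_neg (hΓ : Consistent Γ) (φ : ModalFormula Φ) :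
    Consistent (insert φ Γ) ∨ Consistent (insert (neg φ) Γ) := by
  by_contra! h
  obtain ⟨L₁, hL₁, hd₁⟩ := exists_deriv_neg_of_not_consistent_insert h.1
  obtain ⟨L₂, hL₂, hd₂⟩ := exists_deriv_neg_of_not_consistent_insert h.2
  refine hΓ (L₁ ++ L₂) (fun ψ hψ => (List.mem_append.1 hψ).elim (hL₁ ψ) (hL₂ ψ)) ?_
  refine Deriv.mp (hd₁.mp_tautology fun w => ?_) hd₂
  simp only [propEval_impl, propEval_listConj, List.forall_mem_append, PropEval]
  tauto

theorem consistent_sUnion_of_isChain {c : Set (Set (ModalFormula Φ))}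
    (hc : ∀ Δ ∈ c, Consistent Δ) (hchain : IsChain (· ⊆ ·) c) (hne : c.Nonempty) :
    Consistent (⋃₀ c) := fun L hL => by
  obtain ⟨Δ, hΔc, hLΔ⟩ :=
    hchain.directedOn.exists_mem_subset_of_finite_of_subset_sUnion hne L.finite_toSet hL
  exact hc Δ hΔc L hLΔ

theorem Consistent.exists_maxConsistent_superset (hΓ : Consistent Γ) :
    ∃ u, MaxConsistent u ∧ Γ ⊆ u := by
  obtain ⟨u, hΓu, hmax⟩ := zorn_subset_nonempty {Δ | Consistent Δ}
    (fun c hc hchain hne => ⟨⋃₀ c, consistent_sUnion_of_isChain hc hchain hne,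
      fun _ => Set.subset_sUnion_of_mem⟩) Γ hΓ
  exact ⟨u, ⟨hmax.prop, fun φ => (hmax.prop.insert_or_insert_neg φ).imp
    hmax.mem_of_prop_insert hmax.mem_of_prop_insert⟩, hΓu⟩

end Consistent

theorem MaxConsistent.consistent_insert_neg_of_box_not_mem {u : Set (ModalFormula Φ)}
    (hu : MaxConsistent u) {φ : ModalFormula Φ} (h : box φ ∉ u) :
    Consistent (insert (neg φ) {ψ | box ψ ∈ u}) := by
  by_contra hc
  obtain ⟨L, hL, hd⟩ := exists_deriv_neg_of_not_consistent_insert hc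
  exact h (hu.box_mem_of_deriv_impl hL (hd.mp_tautology fun w => by simp [PropEval]))

theorem CanonicalModel.exists_rel_superset (u : CanonicalState Φ) {S : Set (ModalFormula Φ)}
    (h : Consistent (S ∪ {ψ | box ψ ∈ u.1})) :
    ∃ w, (CanonicalModel Φ).R u w ∧ S ⊆ w.1 := by
  obtain ⟨w, hw, hsub⟩ := h.exists_maxConsistent_superset
  exact ⟨⟨w, hw⟩, fun ψ hψ => hsub (.inr hψ), fun ψ hψ => hsub (.inl hψ)⟩

theorem CanonicalModel.satisfies_iff (u : CanonicalState Φ) (φ : ModalFormula Φ) :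
    Satisfies (CanonicalModel Φ) u φ ↔ φ ∈ u.1 := by
  induction φ generalizing u with
  | atom p => exact Iff.rfl
  | top => exact iff_of_true trivial u.2.top_mem
  | bot => exact iff_of_false id u.2.bot_not_mem
  | neg φ ih => rw [Satisfies, ih, u.2.neg_mem_iff]
  | and φ ψ ih₁ ih₂ => rw [Satisfies, ih₁, ih₂, u.2.and_mem_iff]
  | or φ ψ ih₁ ih₂ => rw [Satisfies, ih₁, ih₂, u.2.or_mem_iff]
  | box φ ih =>
    refine ⟨fun h => by_contra fun hφ => ?_, fun h w huw => (ih w).2 (huw φ h)⟩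
    obtain ⟨w, huw, hw⟩ := exists_rel_superset u (S := {neg φ})
      (Set.insert_eq _ _ ▸ u.2.consistent_insert_neg_of_box_not_mem hφ)
    exact w.2.neg_mem_iff.1 (hw rfl) ((ih w).1 (h w huw))

end

/-- The canonical model is saturated. -/
theorem canonicalModel_saturated (Φ : Type*) : Saturated (CanonicalModel Φ) := by
  intro u S hS
  suffices hcons : Consistent (S ∪ {ψ | box ψ ∈ u.1}) by
    obtain ⟨w, huw, hSw⟩ := CanonicalModel.exists_rel_superset u hcons
    exact ⟨w, huw, fun φ hφ => (CanonicalModel.satisfies_iff w φ).2 (hSw hφ)⟩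
  intro L hL
  obtain ⟨w, huw, hw⟩ := hS {φ | φ ∈ L ∧ φ ∈ S} (fun _ hφ => hφ.2)
    (L.finite_toSet.subset fun _ hφ => hφ.1)
  refine w.2.1 L fun φ hφ => (hL φ hφ).elim (fun hφS => ?_) (huw φ)
  exact (CanonicalModel.satisfies_iff w φ).1 (hw φ ⟨hφ, hφS⟩)
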